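/- Let w be a Lyndon word of length at least 2 with left standard factorization w = uv, and suppose v has length at least 2 with left standard factorization v = v₁v₂. Then v₁ is a prefix of u. -/

import Mathlib

variable {A : Type*} [LinearOrder A]

/-- A nonempty word `w` is a Lyndon word: `w` is lexicographically smaller than
each of its nonempty proper suffixes. -/
def IsLyndon (w : List A) : Prop :=
  w ≠ [] ∧ ∀ v, v <:+ w → v ≠ [] → v ≠ w → List.Lex (· < ·) w v

/-- `w = uv` is the left standard factorization of `w`: `u` is the longest nonempty
proper prefix of `w` that is a Lyndon word, and `v` the corresponding suffix. -/
def LeftStdFact (w u v : List A) : Prop :=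
  w = u ++ v ∧ u ≠ [] ∧ v ≠ [] ∧ IsLyndon u ∧
    ∀ u', u' <+: w → u' ≠ [] → u' ≠ w → IsLyndon u' → u'.length ≤ u.length

set_option linter.unusedSectionVars false

lemma lex_append_of_not_prefix : ∀ {x y : List A}, List.Lex (· < ·) x y → ¬ x <+: y →
    ∀ s t, List.Lex (· < ·) (x ++ s) (y ++ t) := by
  intro x y h
  induction h with
  | nil => intro hp; exact absurd (List.nil_prefix) hp
  | @cons a l₁ l₂ h ih =>
      intro hp s t
      exact List.Lex.cons (ih (fun hpre => hp (List.cons_prefix_cons.mpr ⟨rfl, hpre⟩)) s t)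
  | rel hab => intro _ s t; exact List.Lex.rel hab

lemma suffix_append_cases {s x y : List A} (h : s <:+ x ++ y) :
    s <:+ y ∨ ∃ x', x' <:+ x ∧ x' ≠ [] ∧ s = x' ++ y := by
  obtain ⟨p, hp⟩ := h
  rcases List.append_eq_append_iff.mp hp with ⟨a', ha, hs⟩ | ⟨c', _, hy⟩
  · rcases eq_or_ne a' [] with rfl | hne
    · left; simp [hs]
    · right; exact ⟨a', ⟨p, ha.symm⟩, hne, hs⟩
  · left; exact ⟨c', hy.symm⟩

lemma not_prefix_of_suffix_ne {x x' : List A} (hs : x' <:+ x) (hne : x' ≠ x) :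
    ¬ x <+: x' := by
  intro hp
  exact hne (List.IsSuffix.eq_of_length hs (le_antisymm hs.length_le hp.length_le))

lemma lyndon_append {x y : List A} (hx : IsLyndon x) (hy : IsLyndon y)
    (hxy : List.Lex (· < ·) x y) : IsLyndon (x ++ y) := by
  have key : List.Lex (· < ·) (x ++ y) y := by
    by_cases hp : x <+: y
    · obtain ⟨z, hz⟩ := hp
      have hzne : z ≠ [] := by
        rintro rfl
        rw [List.append_nil] at hz
        subst hz
        exact irrefl_of (List.Lex (· < ·)) x hxy
      have hzy : z ≠ y := by
        rintro rfl
        exact hx.1 (by simpa using congrArg List.length hz)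
      have := hy.2 z ⟨x, hz⟩ hzne hzy
      calc List.Lex (· < ·) (x ++ y) (x ++ z) := List.Lex.append_left _ this x
      _ = _ := by rw [hz]
    · simpa using lex_append_of_not_prefix hxy hp y []
  refine ⟨by simp [hx.1], fun s hs hsne hsnexy => ?_⟩
  rcases suffix_append_cases hs with hsy | ⟨x', hx', hx'ne, rfl⟩
  · rcases eq_or_ne s y with rfl | hne
    · exact key
    · exact List.lex_trans lt_trans key (hy.2 s hsy hsne hne)
  · have hx'x : x' ≠ x := by rintro rfl; exact hsnexy rfl
    have hlex := hx.2 x' hx' hx'ne hx'x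
    exact lex_append_of_not_prefix hlex (not_prefix_of_suffix_ne hx' hx'x) y y

/-- Let `w` be a Lyndon word of length at least 2 with left standard factorization
`w = uv`, and suppose `v` has length at least 2 with left standard factorization
`v = v₁v₂`. Then `v₁` is a prefix of `u`. -/
theorem leftStdFact_inner_prefix (w u v v₁ v₂ : List A) (hw : IsLyndon w)
    (hlenw : 2 ≤ w.length) (hfact : LeftStdFact w u v)
    (hlenv : 2 ≤ v.length) (hfactv : LeftStdFact v v₁ v₂) :
    v₁ <+: u := by
  obtain ⟨hwuv, hu, hv, hLu, hmax⟩ := hfact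
  obtain ⟨hv12, hv₁, hv₂, hLv₁, -⟩ := hfactv
  have hvw : v ≠ w := by
    rintro rfl
    exact hu (by simpa using congrArg List.length hwuv)
  have hwv : List.Lex (· < ·) w v := hw.2 v ⟨u, hwuv.symm⟩ hv hvw
  have hnot : ¬ List.Lex (· < ·) u v₁ := by
    intro h
    have hL := lyndon_append hLu hLv₁ h
    have hpre : (u ++ v₁) <+: w := ⟨v₂, by rw [hwuv, hv12]; simp⟩
    have hne : u ++ v₁ ≠ w := by
      intro he
      have := congrArg List.length he
      rw [hwuv, hv12] at this
      simp at this
      exact hv₂ (by simpa using this)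
    have hle := hmax _ hpre (by simp [hu]) hne hL
    simp at hle
    exact hv₁ hle
  by_cases hp : v₁ <+: u
  · exact hp
  · exfalso
    rcases lt_trichotomy v₁ u with h | rfl | h
    · have : List.Lex (· < ·) v w := by
        rw [hwuv, hv12]
        exact lex_append_of_not_prefix h hp v₂ _
      exact lt_asymm (show w < v from hwv) this
    · exact hp List.prefix_rfl
    · exact hnot h
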